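/- Let (𝔘, G, α) be a C*-dynamical system and ω a state satisfying both two-sided clustering lim_i (ω(α_{g^i}(A)B) − ω(α_{g^i}A)ω(B)) = 0 and the three-element clustering property lim_i (ω(A α_{g^i}(B) C) − ω(α_{g^i}B)ω(AC)) = 0 for all A, B, C ∈ 𝔘. Then for every n ≥ 2, every position 1 ≤ m ≤ n, and all A_1,...,A_n ∈ 𝔘, lim_i κ_n(A_1, ..., α_{g^i}(A_m), ..., A_n) = 0, and the same holds for classical cumulants c_n. -/

import Mathlib

open scoped Classical
open Filter Topology

noncomputable section

/-- `π` is a set-partition of the finite set `S ⊆ ℕ`: a collection of nonempty subsets of `S`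
such that every element of `S` lies in exactly one of them. -/
def IsSetPartition (S : Finset ℕ) (π : Finset (Finset ℕ)) : Prop :=
  (∀ V ∈ π, V ⊆ S) ∧ (∀ V ∈ π, V.Nonempty) ∧ ∀ a ∈ S, ∃! V, V ∈ π ∧ a ∈ V

/-- The finset of all set-partitions of `S`. -/
def setPartitions (S : Finset ℕ) : Finset (Finset (Finset ℕ)) :=
  S.powerset.powerset.filter (IsSetPartition S)

/-- A family of blocks is non-crossing if there are no `a < b < c < d` with `a, c` in one
block and `b, d` in a different block. -/
def IsNonCrossing (π : Finset (Finset ℕ)) : Prop :=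
  ¬ ∃ a b c d : ℕ, a < b ∧ b < c ∧ c < d ∧
      ∃ V ∈ π, ∃ W ∈ π, V ≠ W ∧ a ∈ V ∧ c ∈ V ∧ b ∈ W ∧ d ∈ W

/-- The finset of all non-crossing partitions of `S`. -/
def ncPartitions (S : Finset ℕ) : Finset (Finset (Finset ℕ)) :=
  (setPartitions S).filter IsNonCrossing

variable {𝔘 : Type*}

/-- The ordered list `A_{i_1}, …, A_{i_s}` of observables indexed by `V = {i_1 < ⋯ < i_s}`. -/
def blockList (A : ℕ → 𝔘) (V : Finset ℕ) : List 𝔘 :=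
  (V.sort (· ≤ ·)).map A

/-- The ordered product `A_{i_1} ⋯ A_{i_s}` over the block `V = {i_1 < ⋯ < i_s}`. -/
def blockProd [Monoid 𝔘] (A : ℕ → 𝔘) (V : Finset ℕ) : 𝔘 :=
  (blockList A V).prod

/-- The joint classical cumulant of `ω` of the observables `A_i`, `i ∈ S` (order preserved):
`c(S) = ∑_{π ∈ P(S)} (-1)^{|π|-1}(|π|-1)! ∏_{V ∈ π} ω(∏_{i ∈ V} A_i)`. -/
def cumulant [Monoid 𝔘] (ω : 𝔘 → ℂ) (A : ℕ → 𝔘) (S : Finset ℕ) : ℂ :=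
  ∑ π ∈ setPartitions S,
    (-1 : ℂ) ^ (π.card - 1) * ((π.card - 1).factorial : ℂ) * ∏ V ∈ π, ω (blockProd A V)

/-- `κ` (as a function of the ordered list of observables) is the family of free cumulants of
`ω`: it satisfies the moments-to-free-cumulants formula over non-crossing partitions. -/
def IsFreeCumulantFamily [Monoid 𝔘] (ω : 𝔘 → ℂ) (κ : List 𝔘 → ℂ) : Prop :=
  ∀ (A : ℕ → 𝔘) (S : Finset ℕ), S.Nonempty →
    ω (blockProd A S) = ∑ π ∈ ncPartitions S, ∏ V ∈ π, κ (blockList A V)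

/-- A state on a unital C*-algebra: a positive unital linear functional. -/
structure IsState [NormedRing 𝔘] [StarRing 𝔘] [NormedAlgebra ℂ 𝔘] (ω : 𝔘 →ₗ[ℂ] ℂ) : Prop where
  unital : ω 1 = 1
  positive : ∀ a : 𝔘, 0 ≤ (ω (star a * a)).re ∧ (ω (star a * a)).im = 0

/-- `α` is a representation of the group `G` by *-automorphisms. -/
def IsStarAutoRep {G : Type*} [Monoid G] [Ring 𝔘] [Algebra ℂ 𝔘] [StarRing 𝔘]
    (α : G → 𝔘 ≃⋆ₐ[ℂ] 𝔘) : Prop :=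
  ∀ (g h : G) (x : 𝔘), α (g * h) x = α g (α h x)

/-!
Everything rests on three-element clustering in the form
`ω(P x_i Q) - ω(x_i) ω(PQ) → 0` for `x_i = α_{g^i}(A_m)`, where `P` and `Q` are the products of
the observables before and after position `m` in a block.

Free cumulants, by strong induction on the index set `S`: in the moment–cumulant formula for
`ω(P x_i Q)`, the non-crossing partitions having `{m}` as a block contribute exactly
`ω(x_i) ω(PQ)` (deleting that block is a bijection onto `NC(S \ {m})`), and in every other
partition except `{S}` the block containing `m` is a proper subset of `S` with at least two
points, so its cumulant tends to `0`.

Classical cumulants: in each term of the partition sum only the block containing `m` sees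
`x_i`, through `ω(P x_i Q)`. Replacing that factor by `ω(x_i) ω(PQ)` gives `ω(x_i)` times the
cumulant with `A_m = 1`, which vanishes: grouping the partitions of `S` by their trace `σ` on
`S \ {m}`, the point `m` is either a new block or joins one of the `|σ|` blocks, and the
Möbius weights `μ(|σ| + 1) + |σ| μ(|σ|)` cancel.
-/

open Function

theorem Finset.sort_union_of_forall_lt {α : Type*} [LinearOrder α] {s t : Finset α}
    (h : ∀ a ∈ s, ∀ b ∈ t, a < b) : (s ∪ t).sort = s.sort ++ t.sort := by
  refine (Finset.sortedLT_sort _).eq_of_mem_iff ?_ (by simp)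
  refine List.sortedLT_iff_pairwise.mpr (List.pairwise_append.mpr
    ⟨(Finset.sortedLT_sort s).pairwise, (Finset.sortedLT_sort t).pairwise, ?_⟩)
  simpa using h

lemma blockList_union {A : ℕ → 𝔘} {S T : Finset ℕ} (h : ∀ a ∈ S, ∀ b ∈ T, a < b) :
    blockList A (S ∪ T) = blockList A S ++ blockList A T := by
  rw [blockList, Finset.sort_union_of_forall_lt h, List.map_append, blockList, blockList]

lemma blockList_singleton (A : ℕ → 𝔘) (j : ℕ) : blockList A {j} = [A j] := by
  rw [blockList, Finset.sort_singleton, List.map_singleton]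

lemma blockList_erase (A : ℕ → 𝔘) (V : Finset ℕ) (m : ℕ) :
    blockList A (V.erase m) =
      blockList A (V.filter (· < m)) ++ blockList A (V.filter (m < ·)) := by
  rw [← blockList_union (by simp only [Finset.mem_filter]; omega)]
  congr 1
  ext a
  simp only [Finset.mem_erase, Finset.mem_union, Finset.mem_filter, ne_iff_lt_or_gt]
  tauto

lemma blockList_of_mem {A : ℕ → 𝔘} {V : Finset ℕ} {m : ℕ} (hm : m ∈ V) :
    blockList A V =
      blockList A (V.filter (· < m)) ++ A m :: blockList A (V.filter (m < ·)) := by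
  have hV : V = V.filter (· < m) ∪ ({m} ∪ V.filter (m < ·)) := by
    ext a
    simp only [Finset.mem_union, Finset.mem_filter, Finset.mem_singleton]
    rcases lt_trichotomy a m with h | rfl | h
    · simp [h, h.ne, h.not_gt]
    · simp [hm]
    · simp [h, h.ne', h.not_gt]
  conv_lhs => rw [hV]
  rw [blockList_union, blockList_union, blockList_singleton, List.singleton_append] <;>
    simp only [Finset.mem_union, Finset.mem_filter, Finset.mem_singleton] <;> omega

lemma blockList_update_of_notMem {A : ℕ → 𝔘} {m : ℕ} {V : Finset ℕ} (hm : m ∉ V) (x : 𝔘) :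
    blockList (update A m x) V = blockList A V :=
  List.map_congr_left fun a ha =>
    update_of_ne (by rintro rfl; exact hm ((Finset.mem_sort _).mp ha)) x A

lemma blockProd_erase [Monoid 𝔘] (A : ℕ → 𝔘) (V : Finset ℕ) (m : ℕ) :
    blockProd A (V.erase m) =
      blockProd A (V.filter (· < m)) * blockProd A (V.filter (m < ·)) := by
  rw [blockProd, blockList_erase, List.prod_append, blockProd, blockProd]

lemma blockProd_update_of_mem [Monoid 𝔘] {A : ℕ → 𝔘} {m : ℕ} {V : Finset ℕ} (hm : m ∈ V)
    (x : 𝔘) : blockProd (update A m x) V =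
      blockProd A (V.filter (· < m)) * x * blockProd A (V.filter (m < ·)) := by
  rw [blockProd, blockList_of_mem hm, blockProd, blockProd]
  simp [blockList_update_of_notMem, mul_assoc]

lemma blockProd_update_one [Monoid 𝔘] (A : ℕ → 𝔘) (m : ℕ) (V : Finset ℕ) :
    blockProd (update A m 1) V = blockProd A (V.erase m) := by
  by_cases hm : m ∈ V
  · rw [blockProd_update_of_mem hm, mul_one, blockProd_erase]
  · rw [Finset.erase_eq_of_notMem hm, blockProd, blockList_update_of_notMem hm, blockProd]

lemma mem_setPartitions {S : Finset ℕ} {π : Finset (Finset ℕ)} :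
    π ∈ setPartitions S ↔ IsSetPartition S π := by
  rw [setPartitions, Finset.mem_filter, Finset.mem_powerset, and_iff_right_iff_imp]
  exact fun hπ V hV => Finset.mem_powerset.mpr (hπ.1 V hV)

lemma mem_ncPartitions {S : Finset ℕ} {π : Finset (Finset ℕ)} :
    π ∈ ncPartitions S ↔ IsSetPartition S π ∧ IsNonCrossing π := by
  rw [ncPartitions, Finset.mem_filter, mem_setPartitions]

lemma IsSetPartition.of_exists_of_eq {S : Finset ℕ} {π : Finset (Finset ℕ)}
    (hsub : ∀ V ∈ π, V ⊆ S) (hne : ∀ V ∈ π, V.Nonempty) (hcover : ∀ a ∈ S, ∃ V ∈ π, a ∈ V)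
    (heq : ∀ V ∈ π, ∀ W ∈ π, ∀ a ∈ V, a ∈ W → V = W) : IsSetPartition S π :=
  ⟨hsub, hne, fun a ha =>
    have ⟨V, hV, haV⟩ := hcover a ha
    ⟨V, ⟨hV, haV⟩, fun W ⟨hW, haW⟩ => heq W hW V hV a haW haV⟩⟩

lemma isSetPartition_singleton {S : Finset ℕ} (hS : S.Nonempty) : IsSetPartition S {S} :=
  ⟨by simp, by simpa using hS, fun a ha => ⟨S, by simpa using ha, by simp⟩⟩

namespace IsSetPartition

variable {S : Finset ℕ} {π : Finset (Finset ℕ)}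

lemma eq_of_mem_of_mem (hπ : IsSetPartition S π) {V W : Finset ℕ} {a : ℕ} (hV : V ∈ π)
    (hW : W ∈ π) (haV : a ∈ V) (haW : a ∈ W) : V = W :=
  have ⟨_, _, huniq⟩ := hπ.2.2 a (hπ.1 V hV haV)
  (huniq V ⟨hV, haV⟩).trans (huniq W ⟨hW, haW⟩).symm

lemma exists_mem (hπ : IsSetPartition S π) {a : ℕ} (ha : a ∈ S) : ∃ V ∈ π, a ∈ V :=
  have ⟨V, ⟨hV, haV⟩, _⟩ := hπ.2.2 a ha
  ⟨V, hV, haV⟩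

lemma empty_notMem (hπ : IsSetPartition S π) : ∅ ∉ π :=
  fun h => Finset.not_nonempty_empty (hπ.2.1 ∅ h)

lemma notMem_of_mem_erase (hπ : IsSetPartition S π) {B V : Finset ℕ} {m : ℕ} (hB : B ∈ π)
    (hmB : m ∈ B) (hV : V ∈ π.erase B) : m ∉ V :=
  fun hmV => Finset.ne_of_mem_erase hV
    (hπ.eq_of_mem_of_mem (Finset.mem_of_mem_erase hV) hB hmV hmB)

lemma eq_singleton_of_mem (hπ : IsSetPartition S π) (hS : S ∈ π) : π = {S} := by
  refine Finset.eq_singleton_iff_unique_mem.mpr ⟨hS, fun V hV => ?_⟩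
  obtain ⟨a, ha⟩ := hπ.2.1 V hV
  exact hπ.eq_of_mem_of_mem hV hS ha (hπ.1 V hV ha)

lemma notMem_of_mem_insert_empty {m : ℕ} (hπ : IsSetPartition (S.erase m) π) {V : Finset ℕ}
    (hV : V ∈ insert ∅ π) : m ∉ V := by
  rcases Finset.mem_insert.mp hV with rfl | hV
  · exact Finset.notMem_empty m
  · exact fun hmV => Finset.notMem_erase m S (hπ.1 V hV hmV)

lemma singleton_notMem {m : ℕ} (hπ : IsSetPartition (S.erase m) π) : {m} ∉ π :=
  fun h => hπ.notMem_of_mem_insert_empty (Finset.mem_insert_of_mem h) (Finset.mem_singleton_self m)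

end IsSetPartition

lemma setPartitions_singleton (j : ℕ) : setPartitions {j} = {{{j}}} := by
  ext π
  rw [mem_setPartitions, Finset.mem_singleton]
  refine ⟨fun hπ => hπ.eq_singleton_of_mem ?_, fun h => h ▸ isSetPartition_singleton (by simp)⟩
  obtain ⟨V, hV, hjV⟩ := hπ.exists_mem (Finset.mem_singleton_self j)
  rwa [← Finset.Subset.antisymm (hπ.1 V hV) (Finset.singleton_subset_iff.mpr hjV)]

lemma IsNonCrossing.mono {σ π : Finset (Finset ℕ)} (h : σ ⊆ π) (hπ : IsNonCrossing π) :
    IsNonCrossing σ := by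
  rintro ⟨a, b, c, d, hab, hbc, hcd, V, hV, W, hW, hrest⟩
  exact hπ ⟨a, b, c, d, hab, hbc, hcd, V, h hV, W, h hW, hrest⟩

lemma isNonCrossing_singleton (S : Finset ℕ) : IsNonCrossing {S} := by
  rintro ⟨-, -, -, -, -, -, -, V, hV, W, hW, hVW, -⟩
  exact hVW ((Finset.mem_singleton.mp hV).trans (Finset.mem_singleton.mp hW).symm)

lemma IsNonCrossing.insert_singleton {σ : Finset (Finset ℕ)} (hσ : IsNonCrossing σ) (m : ℕ) :
    IsNonCrossing (insert {m} σ) := by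
  rintro ⟨a, b, c, d, hab, hbc, hcd, V, hV, W, hW, hVW, haV, hcV, hbW, hdW⟩
  rcases Finset.mem_insert.mp hV with rfl | hV
  · simp only [Finset.mem_singleton] at haV hcV
    omega
  rcases Finset.mem_insert.mp hW with rfl | hW
  · simp only [Finset.mem_singleton] at hbW hdW
    omega
  exact hσ ⟨a, b, c, d, hab, hbc, hcd, V, hV, W, hW, hVW, haV, hcV, hbW, hdW⟩

lemma ncPartitions_singleton (j : ℕ) : ncPartitions {j} = {{{j}}} := by
  rw [ncPartitions, setPartitions_singleton, Finset.filter_singleton,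
    if_pos (isNonCrossing_singleton _)]

lemma self_mem_ncPartitions {S : Finset ℕ} (hS : S.Nonempty) : {S} ∈ ncPartitions S :=
  mem_ncPartitions.mpr ⟨isSetPartition_singleton hS, isNonCrossing_singleton S⟩

def eraseFromBlocks (m : ℕ) (π : Finset (Finset ℕ)) : Finset (Finset ℕ) :=
  (π.image (·.erase m)).erase ∅

/-- `W = ∅` encodes adding `{m}` as a new block. -/
def insertIntoBlock (m : ℕ) (σ : Finset (Finset ℕ)) (W : Finset ℕ) : Finset (Finset ℕ) :=
  insert (insert m W) (σ.erase W)

lemma image_erase_eq_insert {π : Finset (Finset ℕ)} {B : Finset ℕ} {m : ℕ} (hB : B ∈ π)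
    (h : ∀ V ∈ π.erase B, m ∉ V) :
    π.image (·.erase m) = insert (B.erase m) (π.erase B) := by
  conv_lhs => rw [← Finset.insert_erase hB]
  rw [Finset.image_insert]
  congr 1
  conv_rhs => rw [← Finset.image_id' (s := π.erase B)]
  exact Finset.image_congr fun V hV => Finset.erase_eq_of_notMem (h V hV)

lemma mem_eraseFromBlocks {π : Finset (Finset ℕ)} {m : ℕ} {U : Finset ℕ} :
    U ∈ eraseFromBlocks m π ↔ U ≠ ∅ ∧ ∃ V ∈ π, V.erase m = U := by
  rw [eraseFromBlocks, Finset.mem_erase, Finset.mem_image]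

namespace IsSetPartition

variable {S : Finset ℕ} {π σ : Finset (Finset ℕ)} {m : ℕ}

lemma eraseFromBlocks (hπ : IsSetPartition S π) (m : ℕ) :
    IsSetPartition (S.erase m) (eraseFromBlocks m π) := by
  refine .of_exists_of_eq (fun U hU => ?_) (fun U hU => ?_) (fun a ha => ?_) ?_
  · obtain ⟨-, V, hV, rfl⟩ := mem_eraseFromBlocks.mp hU
    exact Finset.erase_subset_erase m (hπ.1 V hV)
  · exact Finset.nonempty_iff_ne_empty.mpr (mem_eraseFromBlocks.mp hU).1
  · obtain ⟨ham, haS⟩ := Finset.mem_erase.mp ha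
    obtain ⟨V, hV, haV⟩ := hπ.exists_mem haS
    have haV' : a ∈ V.erase m := Finset.mem_erase.mpr ⟨ham, haV⟩
    exact ⟨V.erase m, mem_eraseFromBlocks.mpr ⟨Finset.ne_empty_of_mem haV', V, hV, rfl⟩, haV'⟩
  · intro U hU U' hU' a haU haU'
    obtain ⟨-, V, hV, rfl⟩ := mem_eraseFromBlocks.mp hU
    obtain ⟨-, V', hV', rfl⟩ := mem_eraseFromBlocks.mp hU'
    rw [hπ.eq_of_mem_of_mem hV hV' (Finset.mem_of_mem_erase haU) (Finset.mem_of_mem_erase haU')]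

lemma insertIntoBlock (hσ : IsSetPartition (S.erase m) σ) (hm : m ∈ S) {W : Finset ℕ}
    (hW : W ∈ insert ∅ σ) : IsSetPartition S (insertIntoBlock m σ W) := by
  have hσm : ∀ V ∈ σ.erase W, m ∉ V := fun V hV =>
    hσ.notMem_of_mem_insert_empty (Finset.mem_insert_of_mem (Finset.mem_of_mem_erase hV))
  have hWσ : W.Nonempty → W ∈ σ := fun hne =>
    (Finset.mem_insert.mp hW).resolve_left (Finset.nonempty_iff_ne_empty.mp hne)
  have hdisj : ∀ U ∈ σ.erase W, ∀ a ∈ insert m W, a ∉ U := fun U hU a haW haU => by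
    have haW : a ∈ W := (Finset.mem_insert.mp haW).resolve_left fun h => hσm U hU (h ▸ haU)
    exact Finset.ne_of_mem_erase hU
      (hσ.eq_of_mem_of_mem (Finset.mem_of_mem_erase hU) (hWσ ⟨a, haW⟩) haU haW)
  refine .of_exists_of_eq (fun V hV => ?_) (fun V hV => ?_) (fun a ha => ?_) ?_
  · rcases Finset.mem_insert.mp hV with rfl | hV
    · exact Finset.insert_subset hm fun b hb =>
        Finset.mem_of_mem_erase (hσ.1 W (hWσ ⟨b, hb⟩) hb)
    · exact (hσ.1 V (Finset.mem_of_mem_erase hV)).trans (Finset.erase_subset m S)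
  · rcases Finset.mem_insert.mp hV with rfl | hV
    · exact Finset.insert_nonempty m W
    · exact hσ.2.1 V (Finset.mem_of_mem_erase hV)
  · by_cases ham : a = m
    · exact ⟨insert m W, Finset.mem_insert_self _ _, ham ▸ Finset.mem_insert_self _ _⟩
    obtain ⟨V, hV, haV⟩ := hσ.exists_mem (Finset.mem_erase.mpr ⟨ham, ha⟩)
    by_cases hVW : V = W
    · exact ⟨insert m W, Finset.mem_insert_self _ _, Finset.mem_insert_of_mem (hVW ▸ haV)⟩
    · exact ⟨V, Finset.mem_insert_of_mem (Finset.mem_erase.mpr ⟨hVW, hV⟩), haV⟩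
  · intro V hV V' hV' a haV haV'
    rcases Finset.mem_insert.mp hV with rfl | hV <;> rcases Finset.mem_insert.mp hV' with rfl | hV'
    · rfl
    · exact absurd haV' (hdisj _ hV' a haV)
    · exact absurd haV (hdisj _ hV a haV')
    · exact hσ.eq_of_mem_of_mem (Finset.mem_of_mem_erase hV) (Finset.mem_of_mem_erase hV') haV haV'

end IsSetPartition

lemma eraseFromBlocks_insertIntoBlock {S : Finset ℕ} {σ : Finset (Finset ℕ)} {m : ℕ}
    (hσ : IsSetPartition (S.erase m) σ) {W : Finset ℕ} (hW : W ∈ insert ∅ σ) :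
    eraseFromBlocks m (insertIntoBlock m σ W) = σ := by
  have hmW : m ∉ W := hσ.notMem_of_mem_insert_empty hW
  have hσm : ∀ V ∈ σ.erase W, m ∉ V := fun V hV =>
    hσ.notMem_of_mem_insert_empty (Finset.mem_insert_of_mem (Finset.mem_of_mem_erase hV))
  rw [eraseFromBlocks, insertIntoBlock, image_erase_eq_insert (Finset.mem_insert_self _ _)
    (by rwa [Finset.erase_insert fun h => hσm _ h (Finset.mem_insert_self m W)]),
    Finset.erase_insert (fun h => hσm _ h (Finset.mem_insert_self m W)), Finset.erase_insert hmW]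
  rcases Finset.mem_insert.mp hW with rfl | hW
  · rw [Finset.erase_insert_eq_erase, Finset.erase_idem, Finset.erase_eq_of_notMem hσ.empty_notMem]
  · rw [Finset.insert_erase hW, Finset.erase_eq_of_notMem hσ.empty_notMem]

lemma insertIntoBlock_eraseFromBlocks {S : Finset ℕ} {π : Finset (Finset ℕ)} {m : ℕ}
    (hπ : IsSetPartition S π) {B : Finset ℕ} (hB : B ∈ π) (hmB : m ∈ B) :
    insertIntoBlock m (eraseFromBlocks m π) (B.erase m) = π := by
  have hBm : B.erase m ∉ π.erase B := fun h =>
    have ⟨a, ha⟩ := hπ.2.1 _ (Finset.mem_of_mem_erase h)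
    Finset.ne_of_mem_erase h
      (hπ.eq_of_mem_of_mem (Finset.mem_of_mem_erase h) hB ha (Finset.mem_of_mem_erase ha))
  have hempty : ∅ ∉ π.erase B := fun h => hπ.empty_notMem (Finset.mem_of_mem_erase h)
  rw [insertIntoBlock, eraseFromBlocks,
    image_erase_eq_insert hB fun V => hπ.notMem_of_mem_erase hB hmB, Finset.insert_erase hmB,
    Finset.erase_right_comm, Finset.erase_insert_eq_erase, Finset.erase_eq_of_notMem hBm,
    Finset.erase_eq_of_notMem hempty, Finset.insert_erase hB]

lemma insertIntoBlock_empty {σ : Finset (Finset ℕ)} (hσ : ∅ ∉ σ) (m : ℕ) :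
    insertIntoBlock m σ ∅ = insert {m} σ := by
  rw [insertIntoBlock, Finset.erase_eq_of_notMem hσ, insert_empty_eq]

lemma eraseFromBlocks_insert_singleton {S : Finset ℕ} {σ : Finset (Finset ℕ)} {m : ℕ}
    (hσ : IsSetPartition (S.erase m) σ) : eraseFromBlocks m (insert {m} σ) = σ := by
  rw [← insertIntoBlock_empty hσ.empty_notMem,
    eraseFromBlocks_insertIntoBlock hσ (Finset.mem_insert_self _ _)]

lemma insert_singleton_eraseFromBlocks {S : Finset ℕ} {π : Finset (Finset ℕ)} {m : ℕ}
    (hπ : IsSetPartition S π) (hm : {m} ∈ π) : insert {m} (eraseFromBlocks m π) = π := by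
  rw [← insertIntoBlock_empty (hπ.eraseFromBlocks m).empty_notMem, ← Finset.erase_singleton m,
    insertIntoBlock_eraseFromBlocks hπ hm (Finset.mem_singleton_self m)]

theorem sum_setPartitions_eq_sum_insertIntoBlock {M : Type*} [AddCommMonoid M] {S : Finset ℕ}
    {m : ℕ} (hm : m ∈ S) (F : Finset (Finset ℕ) → M) :
    ∑ π ∈ setPartitions S, F π =
      ∑ σ ∈ setPartitions (S.erase m), ∑ W ∈ insert ∅ σ, F (insertIntoBlock m σ W) := by
  rw [Finset.sum_sigma']
  symm
  refine Finset.sum_nbij (fun p => insertIntoBlock m p.1 p.2) ?_ ?_ ?_ (fun _ _ => rfl)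
  · rintro ⟨σ, W⟩ hp
    rw [Finset.mem_sigma, mem_setPartitions] at hp
    exact mem_setPartitions.mpr (hp.1.insertIntoBlock hm hp.2)
  · rintro ⟨σ, W⟩ hp ⟨σ', W'⟩ hp' h
    rw [Finset.mem_coe, Finset.mem_sigma, mem_setPartitions] at hp hp'
    dsimp only at hp hp' h
    obtain rfl : σ = σ' := by
      rw [← eraseFromBlocks_insertIntoBlock hp.1 hp.2, h,
        eraseFromBlocks_insertIntoBlock hp'.1 hp'.2]
    have hblock : insert m W = insert m W' :=
      (hp.1.insertIntoBlock hm hp.2).eq_of_mem_of_mem (Finset.mem_insert_self _ _)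
        (h ▸ Finset.mem_insert_self _ _) (Finset.mem_insert_self m W) (Finset.mem_insert_self m W')
    obtain rfl : W = W' := by
      rw [← Finset.erase_insert (hp.1.notMem_of_mem_insert_empty hp.2), hblock,
        Finset.erase_insert (hp'.1.notMem_of_mem_insert_empty hp'.2)]
    rfl
  · intro π hπ
    rw [Finset.mem_coe, mem_setPartitions] at hπ
    obtain ⟨B, hB, hmB⟩ := hπ.exists_mem hm
    refine ⟨⟨eraseFromBlocks m π, B.erase m⟩, ?_, insertIntoBlock_eraseFromBlocks hπ hB hmB⟩
    rw [Finset.mem_coe, Finset.mem_sigma, mem_setPartitions]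
    refine ⟨hπ.eraseFromBlocks m, ?_⟩
    by_cases h : B.erase m = ∅
    · exact h ▸ Finset.mem_insert_self _ _
    · exact Finset.mem_insert_of_mem (mem_eraseFromBlocks.mpr ⟨h, B, hB, rfl⟩)

theorem sum_ncPartitions_filter_singleton_mem {M : Type*} [AddCommMonoid M] {S : Finset ℕ}
    {m : ℕ} (hm : m ∈ S) (F : Finset (Finset ℕ) → M) :
    ∑ π ∈ (ncPartitions S).filter ({m} ∈ ·), F π =
      ∑ σ ∈ ncPartitions (S.erase m), F (insert {m} σ) := by
  symm
  refine Finset.sum_nbij' (insert ({m} : Finset ℕ)) (eraseFromBlocks m) (fun σ hσ => ?_)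
    (fun π hπ => ?_) (fun σ hσ => ?_) (fun π hπ => ?_) (fun _ _ => rfl)
  · obtain ⟨hσ, hσnc⟩ := mem_ncPartitions.mp hσ
    refine Finset.mem_filter.mpr ⟨mem_ncPartitions.mpr ⟨?_, hσnc.insert_singleton m⟩,
      Finset.mem_insert_self _ _⟩
    rw [← insertIntoBlock_empty hσ.empty_notMem]
    exact hσ.insertIntoBlock hm (Finset.mem_insert_self _ _)
  · obtain ⟨hπ, hmπ⟩ := Finset.mem_filter.mp hπ
    obtain ⟨hπ, hπnc⟩ := mem_ncPartitions.mp hπ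
    refine mem_ncPartitions.mpr ⟨hπ.eraseFromBlocks m, hπnc.mono ?_⟩
    exact (Finset.subset_insert _ _).trans (insert_singleton_eraseFromBlocks hπ hmπ).subset
  · exact eraseFromBlocks_insert_singleton (mem_ncPartitions.mp hσ).1
  · obtain ⟨hπ, hmπ⟩ := Finset.mem_filter.mp hπ
    exact insert_singleton_eraseFromBlocks (mem_ncPartitions.mp hπ).1 hmπ

lemma IsSetPartition.prod_update {M : Type*} [CommMonoid M] {S : Finset ℕ}
    {π : Finset (Finset ℕ)} (hπ : IsSetPartition S π) {B : Finset ℕ} {m : ℕ} (hB : B ∈ π)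
    (hmB : m ∈ B) (F : List 𝔘 → M) (A : ℕ → 𝔘) (x : 𝔘) :
    ∏ V ∈ π, F (blockList (update A m x) V) =
      F (blockList (update A m x) B) * ∏ V ∈ π.erase B, F (blockList A V) := by
  rw [← Finset.mul_prod_erase π _ hB]
  congr 1
  exact Finset.prod_congr rfl fun V hV => by
    rw [blockList_update_of_notMem (hπ.notMem_of_mem_erase hB hmB hV)]

/-- `μ(π, 1̂)` in the lattice of set partitions, for `π` with `k` blocks. -/
def partitionMobius (k : ℕ) : ℂ := (-1) ^ (k - 1) * ((k - 1).factorial : ℂ)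

lemma partitionMobius_succ_add {k : ℕ} (hk : k ≠ 0) :
    partitionMobius (k + 1) + k * partitionMobius k = 0 := by
  obtain ⟨j, rfl⟩ := Nat.exists_eq_succ_of_ne_zero hk
  simp only [partitionMobius, Nat.add_sub_cancel, Nat.factorial_succ, pow_succ]
  push_cast
  ring

lemma cumulant_eq_sum_partitionMobius [Monoid 𝔘] (ω : 𝔘 → ℂ) (A : ℕ → 𝔘) (S : Finset ℕ) :
    cumulant ω A S = ∑ π ∈ setPartitions S, partitionMobius π.card * ∏ V ∈ π, ω (blockProd A V) :=
  rfl

theorem sum_partitionMobius_mul_prod_erase {S : Finset ℕ} {m : ℕ} (hm : m ∈ S)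
    (hS : S.Nontrivial) (f : Finset ℕ → ℂ) (hf : f ∅ = 1) :
    ∑ π ∈ setPartitions S, partitionMobius π.card * ∏ V ∈ π, f (V.erase m) = 0 := by
  rw [sum_setPartitions_eq_sum_insertIntoBlock hm]
  refine Finset.sum_eq_zero fun σ hσ => ?_
  rw [mem_setPartitions] at hσ
  have hσm : ∀ V ∈ σ, m ∉ V := fun V hV =>
    hσ.notMem_of_mem_insert_empty (Finset.mem_insert_of_mem hV)
  have herase : ∀ V ∈ σ, f (V.erase m) = f V := fun V hV => by
    rw [Finset.erase_eq_of_notMem (hσm V hV)]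
  have hnew : partitionMobius (insertIntoBlock m σ ∅).card *
      ∏ V ∈ insertIntoBlock m σ ∅, f (V.erase m) = partitionMobius (σ.card + 1) * ∏ V ∈ σ, f V := by
    rw [insertIntoBlock_empty hσ.empty_notMem, Finset.card_insert_of_notMem hσ.singleton_notMem,
      Finset.prod_insert hσ.singleton_notMem, Finset.erase_singleton, hf, one_mul,
      Finset.prod_congr rfl herase]
  have hold : ∀ W ∈ σ, partitionMobius (insertIntoBlock m σ W).card *
      ∏ V ∈ insertIntoBlock m σ W, f (V.erase m) = partitionMobius σ.card * ∏ V ∈ σ, f V := by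
    intro W hW
    have hnot : insert m W ∉ σ.erase W := fun h =>
      hσm _ (Finset.mem_of_mem_erase h) (Finset.mem_insert_self m W)
    rw [insertIntoBlock, Finset.card_insert_of_notMem hnot, Finset.card_erase_add_one hW,
      Finset.prod_insert hnot, Finset.erase_insert (hσm W hW), ← Finset.mul_prod_erase σ f hW,
      Finset.prod_congr rfl fun V hV => herase V (Finset.mem_of_mem_erase hV)]
  have hσne : σ.card ≠ 0 := by
    obtain ⟨a, ha⟩ := hS.erase_nonempty (a := m)
    obtain ⟨V, hV, -⟩ := hσ.exists_mem ha
    exact Finset.card_ne_zero_of_mem hV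
  rw [Finset.sum_insert hσ.empty_notMem, hnew, Finset.sum_congr rfl hold, Finset.sum_const,
    nsmul_eq_mul, ← mul_assoc, ← add_mul, partitionMobius_succ_add hσne, zero_mul]

theorem cumulant_update_one [Monoid 𝔘] {ω : 𝔘 → ℂ} (hω : ω 1 = 1) (A : ℕ → 𝔘) {S : Finset ℕ}
    {m : ℕ} (hm : m ∈ S) (hS : S.Nontrivial) : cumulant ω (update A m 1) S = 0 := by
  simp_rw [cumulant_eq_sum_partitionMobius, blockProd_update_one]
  refine sum_partitionMobius_mul_prod_erase hm hS (fun V => ω (blockProd A V)) ?_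
  rwa [blockProd, blockList, Finset.sort_empty, List.map_nil, List.prod_nil]

theorem tendsto_cumulant_update [Monoid 𝔘] {ι : Type*} {ω : 𝔘 → ℂ} (hω : ω 1 = 1)
    {l : Filter ι} {x : ι → 𝔘}
    (hx : ∀ P Q : 𝔘, Tendsto (fun i => ω (P * x i * Q) - ω (x i) * ω (P * Q)) l (𝓝 0))
    (A : ℕ → 𝔘) {S : Finset ℕ} {m : ℕ} (hm : m ∈ S) (hS : S.Nontrivial) :
    Tendsto (fun i => cumulant ω (update A m (x i)) S) l (𝓝 0) := by
  have hsplit : ∀ i, cumulant ω (update A m (x i)) S = ∑ π ∈ setPartitions S,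
      partitionMobius π.card * (∏ V ∈ π, ω (blockProd (update A m (x i)) V) -
        ω (x i) * ∏ V ∈ π, ω (blockProd (update A m 1) V)) := fun i => by
    rw [← sub_zero (cumulant _ _ _), ← mul_zero (ω (x i)), ← cumulant_update_one hω A hm hS,
      cumulant_eq_sum_partitionMobius, cumulant_eq_sum_partitionMobius, Finset.mul_sum,
      ← Finset.sum_sub_distrib]
    exact Finset.sum_congr rfl fun π _ => by ring
  rw [← Finset.sum_const_zero (s := setPartitions S)]
  refine (tendsto_finsetSum _ fun π hπ => ?_).congr fun i => (hsplit i).symm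
  have hπ := mem_setPartitions.mp hπ
  obtain ⟨B, hB, hmB⟩ := hπ.exists_mem hm
  set P := blockProd A (B.filter (· < m))
  set Q := blockProd A (B.filter (m < ·))
  set C := ∏ V ∈ π.erase B, ω (blockProd A V)
  have hprod : ∀ y, ∏ V ∈ π, ω (blockProd (update A m y) V) = ω (P * y * Q) * C := fun y => by
    rw [← blockProd_update_of_mem hmB]
    exact hπ.prod_update hB hmB (fun l => ω l.prod) A y
  simpa only [mul_zero, zero_mul] using (((hx P Q).mul_const C).const_mul
    (partitionMobius π.card)).congr fun i => by rw [hprod, hprod, mul_one]; ring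

namespace IsFreeCumulantFamily

variable [Monoid 𝔘] {ω : 𝔘 → ℂ} {κ : List 𝔘 → ℂ}

lemma apply_singleton (hκ : IsFreeCumulantFamily ω κ) (y : 𝔘) : κ [y] = ω y := by
  have h := hκ (fun _ => y) {0} (Finset.singleton_nonempty 0)
  rw [ncPartitions_singleton, Finset.sum_singleton, Finset.prod_singleton, blockProd,
    blockList_singleton, List.prod_singleton] at h
  exact h.symm

lemma sum_filter_singleton_mem (hκ : IsFreeCumulantFamily ω κ) (A : ℕ → 𝔘) {S : Finset ℕ}
    {m : ℕ} (hm : m ∈ S) (hS : S.Nontrivial) (y : 𝔘) :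
    ∑ π ∈ (ncPartitions S).filter ({m} ∈ ·), ∏ V ∈ π, κ (blockList (update A m y) V) =
      ω y * ω (blockProd A (S.erase m)) := by
  rw [sum_ncPartitions_filter_singleton_mem hm, hκ A _ hS.erase_nonempty, Finset.mul_sum]
  refine Finset.sum_congr rfl fun σ hσ => ?_
  have hσ := (mem_ncPartitions.mp hσ).1
  rw [Finset.prod_insert hσ.singleton_notMem, blockList_singleton, update_self,
    hκ.apply_singleton]
  exact congrArg _ (Finset.prod_congr rfl fun V hV => by
    rw [blockList_update_of_notMem (hσ.notMem_of_mem_insert_empty (Finset.mem_insert_of_mem hV))])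

lemma apply_update (hκ : IsFreeCumulantFamily ω κ) (A : ℕ → 𝔘) {S : Finset ℕ} {m : ℕ}
    (hm : m ∈ S) (hS : S.Nontrivial) (y : 𝔘) :
    κ (blockList (update A m y) S) =
      ω (blockProd (update A m y) S) - ω y * ω (blockProd A (S.erase m)) -
        ∑ π ∈ ((ncPartitions S).filter ({m} ∉ ·)).erase {S},
          ∏ V ∈ π, κ (blockList (update A m y) V) := by
  have hS' : {S} ∈ (ncPartitions S).filter ({m} ∉ ·) :=
    Finset.mem_filter.mpr ⟨self_mem_ncPartitions hS.nonempty,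
      fun h => hS.ne_singleton (Finset.mem_singleton.mp h).symm⟩
  have hmoment := hκ (update A m y) S hS.nonempty
  rw [← Finset.sum_filter_add_sum_filter_not _ ({m} ∈ ·), hκ.sum_filter_singleton_mem A hm hS,
    ← Finset.add_sum_erase _ _ hS', Finset.prod_singleton] at hmoment
  linear_combination -hmoment

theorem tendsto_apply_update (hκ : IsFreeCumulantFamily ω κ) {ι : Type*} {l : Filter ι}
    {x : ι → 𝔘}
    (hx : ∀ P Q : 𝔘, Tendsto (fun i => ω (P * x i * Q) - ω (x i) * ω (P * Q)) l (𝓝 0))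
    (A : ℕ → 𝔘) {m : ℕ} {S : Finset ℕ} (hm : m ∈ S) (hS : S.Nontrivial) :
    Tendsto (fun i => κ (blockList (update A m (x i)) S)) l (𝓝 0) := by
  induction S using Finset.strongInduction with | H S ih =>
  have hblocks : ∀ π ∈ ((ncPartitions S).filter ({m} ∉ ·)).erase {S},
      Tendsto (fun i => ∏ V ∈ π, κ (blockList (update A m (x i)) V)) l (𝓝 0) := by
    intro π hπ
    obtain ⟨hne, hπ⟩ := Finset.mem_erase.mp hπ
    obtain ⟨hπ, hmπ⟩ := Finset.mem_filter.mp hπ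
    have hπ := (mem_ncPartitions.mp hπ).1
    obtain ⟨B, hB, hmB⟩ := hπ.exists_mem hm
    have hBS : B ⊂ S := Finset.ssubset_iff_subset_ne.mpr
      ⟨hπ.1 B hB, fun h => hne (hπ.eq_singleton_of_mem (h ▸ hB))⟩
    have hBnt : B.Nontrivial := (Finset.nontrivial_iff_ne_singleton hmB).mpr fun h => hmπ (h ▸ hB)
    simp_rw [hπ.prod_update hB hmB κ A]
    simpa only [zero_mul] using (ih B hBS hmB hBnt).mul_const _
  simp_rw [hκ.apply_update A hm hS, blockProd_update_of_mem hm, blockProd_erase]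
  simpa only [sub_zero, Finset.sum_const_zero] using (hx _ _).sub (tendsto_finsetSum _ hblocks)

end IsFreeCumulantFamily

theorem cumulant_clustering_any_position_general {G ι : Type*}
    [NormedRing 𝔘] [StarRing 𝔘] [NormedAlgebra ℂ 𝔘]
    (α : G → 𝔘 ≃⋆ₐ[ℂ] 𝔘)
    (ω : 𝔘 →ₗ[ℂ] ℂ) (hω : IsState ω)
    (l : Filter ι) (g : ι → G)
    (κ : List 𝔘 → ℂ) (hκ : IsFreeCumulantFamily ⇑ω κ)
    (hcl3 : ∀ A B C : 𝔘, Filter.Tendsto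
      (fun i => ω (A * α (g i) B * C) - ω (α (g i) B) * ω (A * C)) l (𝓝 0)) :
    ∀ n, 2 ≤ n → ∀ m, 1 ≤ m → m ≤ n → ∀ A : ℕ → 𝔘,
      Filter.Tendsto
        (fun i => κ (blockList (Function.update A m (α (g i) (A m))) (Finset.Icc 1 n)))
        l (𝓝 0) ∧
      Filter.Tendsto
        (fun i => cumulant ⇑ω (Function.update A m (α (g i) (A m))) (Finset.Icc 1 n))
        l (𝓝 0) := by
  intro n hn m hm1 hm2 A
  have hm : m ∈ Finset.Icc 1 n := Finset.mem_Icc.mpr ⟨hm1, hm2⟩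
  have hS : (Finset.Icc 1 n).Nontrivial := by
    rw [← Finset.one_lt_card_iff_nontrivial, Nat.card_Icc]
    omega
  have hx (P Q : 𝔘) := hcl3 P (A m) Q
  exact ⟨hκ.tendsto_apply_update hx A hm hS, tendsto_cumulant_update hω.unital hx A hm hS⟩

/-- two-sided clustering together with the three-element clustering property
imply that the n-th free and classical cumulants vanish when any single argument (in any
position m) is translated along the net. -/
theorem cumulant_clustering_any_position {G ι : Type*} [Group G] [TopologicalSpace G] [IsTopologicalGroup G]
    [LocallyCompactSpace G]
    [NormedRing 𝔘] [StarRing 𝔘] [CStarRing 𝔘] [NormedAlgebra ℂ 𝔘] [StarModule ℂ 𝔘]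
    [CompleteSpace 𝔘]
    (α : G → 𝔘 ≃⋆ₐ[ℂ] 𝔘) (hα : IsStarAutoRep α)
    (ω : 𝔘 →ₗ[ℂ] ℂ) (hω : IsState ω)
    (l : Filter ι) (g : ι → G)
    (κ : List 𝔘 → ℂ) (hκ : IsFreeCumulantFamily ⇑ω κ)
    (hcl : ∀ A B : 𝔘, Filter.Tendsto
      (fun i => ω (α (g i) A * B) - ω (α (g i) A) * ω B) l (𝓝 0))
    (hcl3 : ∀ A B C : 𝔘, Filter.Tendsto
      (fun i => ω (A * α (g i) B * C) - ω (α (g i) B) * ω (A * C)) l (𝓝 0)) :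
    ∀ n, 2 ≤ n → ∀ m, 1 ≤ m → m ≤ n → ∀ A : ℕ → 𝔘,
      Filter.Tendsto
        (fun i => κ (blockList (Function.update A m (α (g i) (A m))) (Finset.Icc 1 n)))
        l (𝓝 0) ∧
      Filter.Tendsto
        (fun i => cumulant ⇑ω (Function.update A m (α (g i) (A m))) (Finset.Icc 1 n))
        l (𝓝 0) :=
  cumulant_clustering_any_position_general α ω hω l g κ hκ hcl3
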